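/- Let (R,𝔪) be a commutative noetherian local ring with depth R = 0, and M a finitely generated R-module with depth_R M = 0 such that Z(End_R(M)) is free as an R-module. Then Z(End_R(M)) ≅ R as R-modules. -/

import Mathlib

/-!
Since `depth R = 0`, some `x ≠ 0` is killed by `𝔪`; since `depth M = 0`, `M ≠ 0`. A central
endomorphism `φ` of `M` commutes with every rank-one map `M → R/𝔪 → M`, so it acts on the socle
of `M` as a scalar `c`. Then `φ - c` kills the socle, which contains `x M`, so `x • (φ - c) = 0`,
and in the free module `Z(End M)` this forces `φ - c ∈ 𝔪 Z(End M)`. By Nakayama `Z(End M)` is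
generated by `1`, so it is free of rank one.
-/

set_option synthInstance.maxHeartbeats 400000

open CategoryTheory

/-- The depth of a module `M` over a noetherian local ring `A`:
`inf { n | Ext^n_A(A/𝔪, M) ≠ 0 }`, with the convention that the depth of the
zero module is `∞` (the infimum of the empty set). -/
noncomputable def moduleDepth (A : Type) [CommRing A] [IsLocalRing A]
    (M : Type) [AddCommGroup M] [Module A M] : ℕ∞ :=
  sInf {d : ℕ∞ | ∃ n : ℕ, d = n ∧
    Nontrivial (((Ext A (ModuleCat A) n).obj
      (Opposite.op (ModuleCat.of A (IsLocalRing.ResidueField A)))).obj (ModuleCat.of A M))}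

open Limits IsLocalRing

instance ModuleCat.preservesLimits_linearYoneda_obj {R : Type} [CommRing R] (Y : ModuleCat R) :
    PreservesLimits ((linearYoneda R (ModuleCat R)).obj Y) where
  preservesLimitsOfShape {J} _ :=
    have : PreservesLimitsOfShape J ((linearYoneda R (ModuleCat R)).obj Y ⋙ forget _) :=
      inferInstanceAs (PreservesLimitsOfShape J (yoneda.obj Y))
    preservesLimitsOfShape_of_reflects_of_preserves _ (forget (ModuleCat R))

noncomputable def extZeroIsoHom {R : Type} [CommRing R] (X Y : ModuleCat R) :
    ((Ext R (ModuleCat R) 0).obj (Opposite.op X)).obj Y ≅ ModuleCat.of R (X ⟶ Y) :=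
  have := preservesFiniteColimits_rightOp ((linearYoneda R (ModuleCat R)).obj Y)
  (((linearYoneda R (ModuleCat R)).obj Y).rightOp.leftDerivedZeroIsoSelf.app X).unop.symm

theorem Module.Free.mem_maximalIdeal_smul_top_of_smul_eq_zero {R F : Type*} [CommRing R]
    [IsLocalRing R] [AddCommGroup F] [Module R F] [Module.Free R F] {x : R} (hx : x ≠ 0) {v : F}
    (hv : x • v = 0) : v ∈ maximalIdeal R • (⊤ : Submodule R F) := by
  let b := Module.Free.chooseBasis R F
  have hcoeff (i) : b.repr v i ∈ maximalIdeal R := by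
    refine (mem_maximalIdeal _).mpr fun hunit => hx ?_
    simpa [hunit.mul_left_eq_zero] using congrArg (b.repr · i) hv
  rw [← b.linearCombination_repr v, Finsupp.linearCombination_apply, Finsupp.sum]
  exact Submodule.sum_mem _ fun i _ => Submodule.smul_mem_smul (hcoeff i) Submodule.mem_top

section LocalRing

variable {R : Type} [CommRing R] [IsLocalRing R] {M : Type} [AddCommGroup M] [Module R M]

theorem nontrivial_hom_residueField_of_moduleDepth_eq_zero (h : moduleDepth R M = 0) :
    Nontrivial (ResidueField R →ₗ[R] M) := by
  unfold moduleDepth at h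
  obtain ⟨n, hn, hext⟩ := h ▸ csInf_mem (Set.nonempty_iff_ne_empty.mpr fun hempty => by
    simp [hempty] at h)
  obtain rfl : n = 0 := by exact_mod_cast hn.symm
  exact ((extZeroIsoHom (.of R (ResidueField R)) (.of R M)).toLinearEquiv.toEquiv.trans
    ModuleCat.homEquiv).symm.nontrivial

theorem exists_ne_zero_forall_smul_eq_zero_of_moduleDepth_eq_zero (h : moduleDepth R M = 0) :
    ∃ m : M, m ≠ 0 ∧ ∀ a ∈ maximalIdeal R, a • m = 0 := by
  have := nontrivial_hom_residueField_of_moduleDepth_eq_zero h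
  obtain ⟨f, hf⟩ := exists_ne (0 : ResidueField R →ₗ[R] M)
  have hres (a : R) : f (residue R a) = a • f 1 := by
    rw [← map_smul, ← ResidueField.algebraMap_eq, Algebra.algebraMap_eq_smul_one]
  refine ⟨f 1, fun h1 => hf ?_, fun a ha => ?_⟩
  · ext y
    obtain ⟨a, rfl⟩ := residue_surjective y
    simp [hres, h1]
  · rw [← hres, (residue_eq_zero_iff a).mpr ha, map_zero]

theorem exists_linearMap_quotient_maximalIdeal_apply_eq_one [Module.Finite R M] [Nontrivial M] :
    ∃ (ξ : M →ₗ[R] R ⧸ maximalIdeal R) (v : M), ξ v = 1 := by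
  let := Ideal.Quotient.field (maximalIdeal R)
  obtain ⟨v, hv⟩ : ∃ v : M, v ∉ maximalIdeal R • (⊤ : Submodule R M) := by
    by_contra! h
    exact Submodule.top_ne_ideal_smul_of_le_jacobson_annihilator
      (maximalIdeal_le_jacobson _) (Submodule.eq_top_iff'.mpr h).symm
  obtain ⟨g, hg⟩ := Module.Projective.exists_dual_eq_one (R ⧸ maximalIdeal R)
    (x := (maximalIdeal R • ⊤ : Submodule R M).mkQ v) (by simpa using hv)
  exact ⟨(g.restrictScalars R).comp (Submodule.mkQ _), v, hg⟩

theorem exists_apply_eq_smul_of_mem_center [Module.Finite R M] {φ : Module.End R M}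
    (hφ : φ ∈ Subalgebra.center R (Module.End R M)) :
    ∃ c : R, ∀ w : M, (∀ a ∈ maximalIdeal R, a • w = 0) → φ w = c • w := by
  cases subsingleton_or_nontrivial M
  · exact ⟨0, fun _ _ => Subsingleton.elim _ _⟩
  obtain ⟨ξ, v, hv⟩ := exists_linearMap_quotient_maximalIdeal_apply_eq_one (R := R) (M := M)
  obtain ⟨c, hc⟩ := Ideal.Quotient.mk_surjective (ξ (φ v))
  refine ⟨c, fun w hw => ?_⟩
  let ℓ : R ⧸ maximalIdeal R →ₗ[R] M :=
    (maximalIdeal R).liftQ (LinearMap.toSpanSingleton R M w) fun a ha => hw a ha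
  have hℓ (a : R) : ℓ (Ideal.Quotient.mk _ a) = a • w := rfl
  -- `φ` commutes with the rank-one endomorphism `ℓ ∘ ξ`, which sends `v` to `w`.
  have hcomm := congrArg (· v) (Subalgebra.mem_center_iff.mp hφ (ℓ ∘ₗ ξ))
  simp only [Module.End.mul_apply, LinearMap.comp_apply, hv, ← hc, ← map_one (Ideal.Quotient.mk _),
    hℓ, one_smul] at hcomm
  exact hcomm.symm

theorem exists_smul_one_eq_of_mem_center [IsNoetherianRing R] [Module.Finite R M] {x : R}
    (hx : x ≠ 0) (hxm : ∀ a ∈ maximalIdeal R, a • x = 0)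
    [Module.Free R (Subalgebra.center R (Module.End R M))]
    (s : Subalgebra.center R (Module.End R M)) : ∃ c : R, c • 1 = s := by
  set S := Subalgebra.center R (Module.End R M)
  have : Module.Finite R S :=
    have : IsNoetherian R (Module.End R M) := inferInstanceAs (IsNoetherian R (M →ₗ[R] M))
    Module.Finite.of_injective (Subalgebra.toSubmodule S).subtype Subtype.val_injective
  have hsup : ⊤ ≤ (R ∙ (1 : S)) ⊔ maximalIdeal R • ⊤ := by
    intro t _
    obtain ⟨c, hc⟩ := exists_apply_eq_smul_of_mem_center t.2
    have hx_smul : x • (t - c • 1) = 0 := by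
      ext u
      have hxu : ∀ a ∈ maximalIdeal R, a • x • u = 0 := fun a ha => by
        rw [smul_smul, ← smul_eq_mul, hxm a ha, zero_smul]
      simp only [SetLike.val_smul, AddSubgroupClass.coe_sub, OneMemClass.coe_one,
        LinearMap.smul_apply, LinearMap.sub_apply, Module.End.one_apply, ZeroMemClass.coe_zero,
        LinearMap.zero_apply]
      rw [smul_sub, ← map_smul, hc _ hxu, smul_comm, sub_self]
    have hmem := Module.Free.mem_maximalIdeal_smul_top_of_smul_eq_zero hx hx_smul
    rw [← add_sub_cancel (c • (1 : S)) t]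
    exact Submodule.add_mem_sup (Submodule.smul_mem _ c (Submodule.mem_span_singleton_self _)) hmem
  have hspan := Submodule.le_of_le_smul_of_le_jacobson_bot Module.Finite.fg_top
    (maximalIdeal_le_jacobson ⊥) hsup
  exact Submodule.mem_span_singleton.mp (hspan Submodule.mem_top)

end LocalRing

/-- Let `(R,𝔪)` be a commutative noetherian local ring with `depth R = 0`, and `M` a
finitely generated `R`-module with `depth_R M = 0` such that `Z(End_R M)` is free as an
`R`-module.  Then `Z(End_R M) ≅ R` as `R`-modules. -/
theorem center_end_free_of_depth_zero
    (R : Type) [CommRing R] [IsNoetherianRing R] [IsLocalRing R]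
    (M : Type) [AddCommGroup M] [Module R M] [Module.Finite R M]
    (hR : moduleDepth R R = 0) (hM : moduleDepth R M = 0)
    (hfree : Module.Free R (Subalgebra.center R (Module.End R M))) :
    Nonempty ((Subalgebra.center R (Module.End R M)) ≃ₗ[R] R) := by
  obtain ⟨x, hx, hxm⟩ := exists_ne_zero_forall_smul_eq_zero_of_moduleDepth_eq_zero hR
  obtain ⟨m, hm, -⟩ := exists_ne_zero_forall_smul_eq_zero_of_moduleDepth_eq_zero hM
  have : Nontrivial M := ⟨m, 0, hm⟩
  refine nonempty_linearEquiv_of_rank_eq ?_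
  rw [Module.rank_self, rank_eq_one_iff]
  exact ⟨1, one_ne_zero, exists_smul_one_eq_of_mem_center hx hxm⟩
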